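/- Let Λ ⊆ ℤ² be a set definable by a finite conjunction/disjunction of linear inequalities with integer coefficients and congruence conditions modulo positive integers (a Presburger-definable set). Suppose there is a function α : ℤ → ℤ such that for all (γ, δ) ∈ Λ one has δ ≤ α(γ). Then there exist a positive integer s and γ₀ ∈ ℤ such that for all (γ, δ) ∈ Λ with γ > γ₀ one has δ ≤ s·γ. -/
import Mathlib


/-- Presburger-definable subsets of `ℤ × ℤ`: generated by linear inequalities
and congruence conditions, closed under boolean operations. -/
inductive PresburgerSet : Set (ℤ × ℤ) → Prop where
  | ineq (a b c : ℤ) : PresburgerSet {p | a * p.1 + b * p.2 + c ≤ 0}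
  | congr (a b c : ℤ) (n : ℕ) (hn : 1 ≤ n) :
      PresburgerSet {p | (a * p.1 + b * p.2 + c) % (n : ℤ) = 0}
  | union (S T : Set (ℤ × ℤ)) : PresburgerSet S → PresburgerSet T → PresburgerSet (S ∪ T)
  | inter (S T : Set (ℤ × ℤ)) : PresburgerSet S → PresburgerSet T → PresburgerSet (S ∩ T)
  | compl (S : Set (ℤ × ℤ)) : PresburgerSet S → PresburgerSet Sᶜ

/-- A set is "good" if far above the line `δ = s·γ` (for `γ > γ₀`),
membership depends only on `γ` and `δ % N`. -/
def PresGood (S : Set (ℤ × ℤ)) : Prop :=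
  ∃ (s N : ℕ) (γ₀ : ℤ), 0 < N ∧ 0 ≤ γ₀ ∧
    ∀ γ δ δ' : ℤ, γ₀ < γ → (s : ℤ) * γ ≤ δ → (s : ℤ) * γ ≤ δ' →
      (N : ℤ) ∣ (δ - δ') → ((γ, δ) ∈ S ↔ (γ, δ') ∈ S)

lemma presGood (S : Set (ℤ × ℤ)) (h : PresburgerSet S) : PresGood S := by
  induction h with
  | ineq a b c =>
    rcases lt_trichotomy b 0 with hb | hb | hb
    · -- b < 0 : eventually always true
      refine ⟨a.natAbs + 1, 1, |c|, one_pos, abs_nonneg c, ?_⟩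
      intro γ δ δ' hγ h1 h2 _
      have hγ0 : 0 < γ := lt_of_le_of_lt (abs_nonneg c) hγ
      have hcγ : c < γ := lt_of_le_of_lt (le_abs_self c) hγ
      have habs : (a.natAbs : ℤ) = |a| := (Int.abs_eq_natAbs a).symm
      have key : ∀ d : ℤ, ((a.natAbs : ℤ) + 1) * γ ≤ d → a * γ + b * d + c ≤ 0 := by
        intro d hd
        rw [habs] at hd
        have hd0 : 0 < d := lt_of_lt_of_le (by positivity) hd
        have h1 : b * d ≤ -d := by nlinarith
        have h2 : a * γ ≤ |a| * γ := by nlinarith [le_abs_self a]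
        nlinarith
      simp only [Set.mem_setOf_eq]
      constructor
      · intro _; exact key δ' (by push_cast at h2 ⊢; linarith)
      · intro _; exact key δ (by push_cast at h1 ⊢; linarith)
    · -- b = 0 : depends only on γ
      refine ⟨0, 1, 0, one_pos, le_refl 0, ?_⟩
      intro γ δ δ' _ _ _ _
      simp [hb]
    · -- b > 0 : eventually always false
      refine ⟨a.natAbs + 1, 1, |c|, one_pos, abs_nonneg c, ?_⟩
      intro γ δ δ' hγ h1 h2 _
      have hγ0 : 0 < γ := lt_of_le_of_lt (abs_nonneg c) hγ
      have hcγ : -γ < c := by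
        have := neg_abs_le c; linarith
      have habs : (a.natAbs : ℤ) = |a| := (Int.abs_eq_natAbs a).symm
      have key : ∀ d : ℤ, ((a.natAbs : ℤ) + 1) * γ ≤ d → ¬ (a * γ + b * d + c ≤ 0) := by
        intro d hd
        rw [habs] at hd
        have hd0 : 0 < d := lt_of_lt_of_le (by positivity) hd
        have h1 : d ≤ b * d := by nlinarith
        have h2 : -(|a| * γ) ≤ a * γ := by nlinarith [neg_abs_le a]
        intro hcon
        nlinarith
      simp only [Set.mem_setOf_eq]
      constructor
      · intro hmem; exact absurd hmem (key δ (by push_cast at h1 ⊢; linarith))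
      · intro hmem; exact absurd hmem (key δ' (by push_cast at h2 ⊢; linarith))
  | congr a b c n hn =>
    refine ⟨0, n, 0, hn, le_refl 0, ?_⟩
    intro γ δ δ' _ _ _ hdvd
    have hdvd2 : (n : ℤ) ∣ (a * γ + b * δ + c) - (a * γ + b * δ' + c) := by
      have : (a * γ + b * δ + c) - (a * γ + b * δ' + c) = b * (δ - δ') := by ring
      rw [this]
      exact Dvd.dvd.mul_left hdvd b
    have hm : (a * γ + b * δ + c) % (n : ℤ) = (a * γ + b * δ' + c) % (n : ℤ) :=
      Int.ModEq.symm (Int.modEq_iff_dvd.mpr hdvd2)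
    simp only [Set.mem_setOf_eq, hm]
  | union S T _ _ ihS ihT =>
    obtain ⟨s1, N1, γ1, hN1, hγ1, h1⟩ := ihS
    obtain ⟨s2, N2, γ2, hN2, hγ2, h2⟩ := ihT
    refine ⟨max s1 s2, N1 * N2, max γ1 γ2, Nat.mul_pos hN1 hN2,
      le_trans hγ1 (le_max_left _ _), ?_⟩
    intro γ δ δ' hγ hδ hδ' hdvd
    have hγ0 : (0:ℤ) ≤ γ := le_of_lt (lt_of_le_of_lt (le_trans hγ1 (le_max_left _ _)) hγ)
    have hs1 : (s1 : ℤ) * γ ≤ δ := le_trans (by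
      have : (s1 : ℤ) ≤ (max s1 s2 : ℕ) := by exact_mod_cast le_max_left s1 s2
      nlinarith) hδ
    have hs1' : (s1 : ℤ) * γ ≤ δ' := le_trans (by
      have : (s1 : ℤ) ≤ (max s1 s2 : ℕ) := by exact_mod_cast le_max_left s1 s2
      nlinarith) hδ'
    have hs2 : (s2 : ℤ) * γ ≤ δ := le_trans (by
      have : (s2 : ℤ) ≤ (max s1 s2 : ℕ) := by exact_mod_cast le_max_right s1 s2
      nlinarith) hδ
    have hs2' : (s2 : ℤ) * γ ≤ δ' := le_trans (by
      have : (s2 : ℤ) ≤ (max s1 s2 : ℕ) := by exact_mod_cast le_max_right s1 s2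
      nlinarith) hδ'
    have hd1 : (N1 : ℤ) ∣ (δ - δ') := dvd_trans (by exact_mod_cast Dvd.intro N2 rfl) hdvd
    have hd2 : (N2 : ℤ) ∣ (δ - δ') := dvd_trans (by exact_mod_cast Dvd.intro_left N1 rfl) hdvd
    exact or_congr (h1 γ δ δ' (lt_of_le_of_lt (le_max_left _ _) hγ) hs1 hs1' hd1)
      (h2 γ δ δ' (lt_of_le_of_lt (le_max_right _ _) hγ) hs2 hs2' hd2)
  | inter S T _ _ ihS ihT =>
    obtain ⟨s1, N1, γ1, hN1, hγ1, h1⟩ := ihS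
    obtain ⟨s2, N2, γ2, hN2, hγ2, h2⟩ := ihT
    refine ⟨max s1 s2, N1 * N2, max γ1 γ2, Nat.mul_pos hN1 hN2,
      le_trans hγ1 (le_max_left _ _), ?_⟩
    intro γ δ δ' hγ hδ hδ' hdvd
    have hγ0 : (0:ℤ) ≤ γ := le_of_lt (lt_of_le_of_lt (le_trans hγ1 (le_max_left _ _)) hγ)
    have hs1 : (s1 : ℤ) * γ ≤ δ := le_trans (by
      have : (s1 : ℤ) ≤ (max s1 s2 : ℕ) := by exact_mod_cast le_max_left s1 s2
      nlinarith) hδ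
    have hs1' : (s1 : ℤ) * γ ≤ δ' := le_trans (by
      have : (s1 : ℤ) ≤ (max s1 s2 : ℕ) := by exact_mod_cast le_max_left s1 s2
      nlinarith) hδ'
    have hs2 : (s2 : ℤ) * γ ≤ δ := le_trans (by
      have : (s2 : ℤ) ≤ (max s1 s2 : ℕ) := by exact_mod_cast le_max_right s1 s2
      nlinarith) hδ
    have hs2' : (s2 : ℤ) * γ ≤ δ' := le_trans (by
      have : (s2 : ℤ) ≤ (max s1 s2 : ℕ) := by exact_mod_cast le_max_right s1 s2
      nlinarith) hδ'
    have hd1 : (N1 : ℤ) ∣ (δ - δ') := dvd_trans (by exact_mod_cast Dvd.intro N2 rfl) hdvd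
    have hd2 : (N2 : ℤ) ∣ (δ - δ') := dvd_trans (by exact_mod_cast Dvd.intro_left N1 rfl) hdvd
    exact and_congr (h1 γ δ δ' (lt_of_le_of_lt (le_max_left _ _) hγ) hs1 hs1' hd1)
      (h2 γ δ δ' (lt_of_le_of_lt (le_max_right _ _) hγ) hs2 hs2' hd2)
  | compl S _ ihS =>
    obtain ⟨s, N, γ₀, hN, hγ₀, h⟩ := ihS
    exact ⟨s, N, γ₀, hN, hγ₀, fun γ δ δ' hγ hδ hδ' hdvd =>
      not_congr (h γ δ δ' hγ hδ hδ' hdvd)⟩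

/-- If `Λ ⊆ ℤ²` is Presburger-definable and the second coordinate is bounded
above on each vertical fiber, then there are `s ∈ ℕ₊` and `γ₀` such that
`δ ≤ s·γ` for all `(γ, δ) ∈ Λ` with `γ > γ₀`. -/
theorem presburger_linear_bound (Λ : Set (ℤ × ℤ)) (hΛ : PresburgerSet Λ)
    (α : ℤ → ℤ) (hα : ∀ p ∈ Λ, p.2 ≤ α p.1) :
    ∃ (s : ℕ) (γ₀ : ℤ), 0 < s ∧ ∀ p ∈ Λ, γ₀ < p.1 → p.2 ≤ (s : ℤ) * p.1 := by
  obtain ⟨s, N, γ₀, hN, hγ₀, h⟩ := presGood Λ hΛ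
  refine ⟨s + 1, γ₀, Nat.succ_pos s, ?_⟩
  rintro ⟨γ, δ⟩ hp hγ
  by_contra hcon
  push_neg at hcon
  simp only at hcon hγ hp
  have hγ0 : (0:ℤ) < γ := lt_of_le_of_lt hγ₀ hγ
  have hδlow : (s : ℤ) * γ ≤ δ := by
    push_cast at hcon
    nlinarith
  -- pumping: (γ, δ + N*k) ∈ Λ for every k : ℕ
  have pump : ∀ k : ℕ, (γ, δ + (N : ℤ) * k) ∈ Λ := by
    intro k
    have hNk : (0:ℤ) ≤ (N : ℤ) * k := by positivity
    have hδ' : (s : ℤ) * γ ≤ δ + (N : ℤ) * k := by linarith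
    have hdvd : (N : ℤ) ∣ (δ - (δ + (N : ℤ) * k)) := by
      have : δ - (δ + (N : ℤ) * k) = (N : ℤ) * (-(k : ℤ)) := by ring
      rw [this]; exact Dvd.intro _ rfl
    exact (h γ δ (δ + (N : ℤ) * k) hγ hδlow hδ' hdvd).mp hp
  -- choose k large enough to exceed the fiber bound
  set k : ℕ := (α γ - δ).toNat + 1 with hk
  have hb := hα _ (pump k)
  simp only at hb
  have h1 : (N : ℤ) * k ≥ (k : ℤ) := by
    have hN1 : (1 : ℤ) ≤ (N : ℤ) := by exact_mod_cast hN
    nlinarith [Int.ofNat_nonneg k]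
  have h2 : α γ - δ < (k : ℤ) := by
    rw [hk]
    push_cast
    have := Int.self_le_toNat (α γ - δ)
    linarith
  linarith
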